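/- arXiv:2307.04079 — 3 statements merged into one kernel-verified Lean document; each statement's English description precedes it below -/
import Mathlib

section
/- In a projective rectangle, all special lines have the same number of points. -/
/-- A projective rectangle: an incidence structure satisfying axioms (A1)-(A6). -/
structure ProjRect (Point Line : Type) where
  Incid : Point → Line → Prop
  /-- (A4) the special point. -/
  D : Point
  /-- (A1) every two distinct points lie on exactly one line. -/
  A1 : ∀ p q : Point, p ≠ q → ∃! l : Line, Incid p l ∧ Incid q l
  /-- (A2) there exist four points with no three collinear. -/
  A2 : ∃ a b c d : Point, a ≠ b ∧ a ≠ c ∧ a ≠ d ∧ b ≠ c ∧ b ≠ d ∧ c ≠ d ∧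
    (∀ l : Line, ¬(Incid a l ∧ Incid b l ∧ Incid c l)) ∧
    (∀ l : Line, ¬(Incid a l ∧ Incid b l ∧ Incid d l)) ∧
    (∀ l : Line, ¬(Incid a l ∧ Incid c l ∧ Incid d l)) ∧
    (∀ l : Line, ¬(Incid b l ∧ Incid c l ∧ Incid d l))
  /-- (A3) every line has at least three points. -/
  A3 : ∀ l : Line, ∃ p q r : Point, p ≠ q ∧ p ≠ r ∧ q ≠ r ∧
    Incid p l ∧ Incid q l ∧ Incid r l
  /-- (A5) each special line intersects every other line in exactly one point. -/
  A5 : ∀ s l : Line, Incid D s → l ≠ s → ∃! p : Point, Incid p s ∧ Incid p l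
  /-- (A6) restricted Pasch axiom. -/
  A6 : ∀ l1 l2 l3 l4 : Line, ∀ p p13 p14 p23 p24 : Point,
    ¬Incid D l1 → ¬Incid D l2 → l1 ≠ l2 → Incid p l1 → Incid p l2 → l3 ≠ l4 →
    Incid p13 l1 → Incid p13 l3 → Incid p14 l1 → Incid p14 l4 →
    Incid p23 l2 → Incid p23 l3 → Incid p24 l2 → Incid p24 l4 →
    p13 ≠ p14 → p13 ≠ p23 → p13 ≠ p24 → p14 ≠ p23 → p14 ≠ p24 → p23 ≠ p24 →
    ∃ q : Point, Incid q l3 ∧ Incid q l4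

/-!
Fix a point `z` off a special line `s`. By (A5) every line through `z` meets `s` in exactly one
point, and by (A1) every point of `s` lies on exactly one line through `z`, so the pencil of
lines through `z` is in bijection with the points of `s`. Two distinct special lines `s` and `t`
therefore have as many points as the pencil of any point lying on neither of them.
-/

namespace ProjRect

variable {Point Line : Type} (R : ProjRect Point Line)

theorem line_eq_of_incid {p q : Point} (hpq : p ≠ q) {l m : Line}
    (hpl : R.Incid p l) (hql : R.Incid q l) (hpm : R.Incid p m) (hqm : R.Incid q m) : l = m :=
  (R.A1 p q hpq).unique ⟨hpl, hql⟩ ⟨hpm, hqm⟩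

theorem eq_D_of_incid_special {s t : Line} (hs : R.Incid R.D s) (ht : R.Incid R.D t)
    (hst : s ≠ t) {p : Point} (hps : R.Incid p s) (hpt : R.Incid p t) : p = R.D := by
  by_contra hp
  exact hst (R.line_eq_of_incid hp hps hs hpt ht)

theorem exists_incid_ne_ne (l : Line) (a b : Point) :
    ∃ p, R.Incid p l ∧ p ≠ a ∧ p ≠ b := by
  obtain ⟨p, q, r, hpq, hpr, hqr, hp, hq, hr⟩ := R.A3 l
  by_contra! h
  rcases eq_or_ne p a with rfl | hpa
  · exact hqr ((h q hq (Ne.symm hpq)).trans (h r hr (Ne.symm hpr)).symm)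
  rcases eq_or_ne q a with rfl | hqa
  · exact hpr ((h p hp hpa).trans (h r hr (Ne.symm hqr)).symm)
  · exact hpq ((h p hp hpa).trans (h q hq hqa).symm)

/-- A third point on the line joining points of `s` and `t` other than `D`. -/
theorem exists_not_incid_of_special {s t : Line} (hs : R.Incid R.D s) (ht : R.Incid R.D t)
    (hst : s ≠ t) : ∃ z, ¬R.Incid z s ∧ ¬R.Incid z t := by
  obtain ⟨x, hxs, hxD, -⟩ := R.exists_incid_ne_ne s R.D R.D
  obtain ⟨y, hyt, hyD, -⟩ := R.exists_incid_ne_ne t R.D R.D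
  have hxt : ¬R.Incid x t := fun h => hxD (R.eq_D_of_incid_special hs ht hst hxs h)
  have hys : ¬R.Incid y s := fun h => hyD (R.eq_D_of_incid_special hs ht hst h hyt)
  obtain ⟨l, ⟨hxl, hyl⟩, -⟩ := R.A1 x y (fun h => hxt (h ▸ hyt))
  obtain ⟨z, hzl, hzx, hzy⟩ := R.exists_incid_ne_ne l x y
  refine ⟨z, fun hzs => hys ?_, fun hzt => hxt ?_⟩
  · rwa [R.line_eq_of_incid hzx hzl hxl hzs hxs] at hyl
  · rwa [R.line_eq_of_incid hzy hzl hyl hzt hyt] at hxl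

theorem existsUnique_meet {s : Line} (hs : R.Incid R.D s) {z : Point} (hz : ¬R.Incid z s)
    (l : {l : Line // R.Incid z l}) :
    ∃! p, R.Incid p s ∧ R.Incid p l :=
  R.A5 s l hs fun h => hz (h ▸ l.2)

noncomputable def meet {s : Line} (hs : R.Incid R.D s) {z : Point} (hz : ¬R.Incid z s)
    (l : {l : Line // R.Incid z l}) : {p : Point // R.Incid p s} :=
  ⟨_, ((R.existsUnique_meet hs hz l).exists.choose_spec).1⟩

theorem incid_meet {s : Line} (hs : R.Incid R.D s) {z : Point} (hz : ¬R.Incid z s)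
    (l : {l : Line // R.Incid z l}) : R.Incid (R.meet hs hz l).1 l :=
  ((R.existsUnique_meet hs hz l).exists.choose_spec).2

theorem meet_bijective {s : Line} (hs : R.Incid R.D s) {z : Point} (hz : ¬R.Incid z s) :
    Function.Bijective (R.meet hs hz) := by
  constructor
  · intro l m hlm
    have hne : (R.meet hs hz l).1 ≠ z := fun h => hz (h ▸ (R.meet hs hz l).2)
    exact Subtype.ext (R.line_eq_of_incid hne (R.incid_meet hs hz l) l.2
      (hlm ▸ R.incid_meet hs hz m) m.2)
  · intro p
    obtain ⟨l, ⟨hpl, hzl⟩, -⟩ := R.A1 p z fun h => hz (h ▸ p.2)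
    refine ⟨⟨l, hzl⟩, Subtype.ext ?_⟩
    exact (R.existsUnique_meet hs hz ⟨l, hzl⟩).unique
      ⟨(R.meet hs hz _).2, R.incid_meet hs hz _⟩ ⟨p.2, hpl⟩

noncomputable def pencilEquiv {s : Line} (hs : R.Incid R.D s) {z : Point} (hz : ¬R.Incid z s) :
    {l : Line // R.Incid z l} ≃ {p : Point // R.Incid p s} :=
  Equiv.ofBijective _ (R.meet_bijective hs hz)

end ProjRect

/-- All special lines have the same number of points. -/
theorem stmt_4 {Point Line : Type} (R : ProjRect Point Line) (s t : Line)
    (hs : R.Incid R.D s) (ht : R.Incid R.D t) :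
    Nonempty ({p : Point // R.Incid p s} ≃ {p : Point // R.Incid p t}) := by
  rcases eq_or_ne s t with rfl | hst
  · exact ⟨Equiv.refl _⟩
  obtain ⟨z, hzs, hzt⟩ := R.exists_not_incid_of_special hs ht hst
  exact ⟨(R.pencilEquiv hs hzs).symm.trans (R.pencilEquiv ht hzt)⟩
end

section
/- A finite projective rectangle of order (m,n) has exactly (m+1)n ordinary points and exactly n^2 ordinary lines. -/
/-- A projective rectangle has order (m,n) if it has exactly m+1 special lines and
each special line has exactly n+1 points. -/
def ProjRect.HasOrder {Point Line : Type} (R : ProjRect Point Line) (m n : ℕ) : Prop :=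
  Set.ncard {l : Line | R.Incid R.D l} = m + 1 ∧
  ∀ s : Line, R.Incid R.D s → Set.ncard {p : Point | R.Incid p s} = n + 1

/-
Every ordinary point lies on exactly one special line (its join with D), and each special line
carries n ordinary points, so the ordinary points split into m + 1 classes of size n. For the
lines, fix two distinct special lines s and s'. An ordinary line meets each of them in exactly
one point, necessarily ordinary, and is the join of these two points; conversely the join of an
ordinary point of s with one of s' is ordinary. Hence ordinary lines correspond to pairs of
ordinary points on s and s', giving n * n of them.
-/

namespace ProjRect

variable {Point Line : Type} (R : ProjRect Point Line)

def specialLines : Set Line := {l | R.Incid R.D l}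

def ordinaryPoints : Set Point := {p | p ≠ R.D}

def ordinaryLines : Set Line := {l | ¬R.Incid R.D l}

def ordinaryPointsOn (l : Line) : Set Point := {p | R.Incid p l ∧ p ≠ R.D}

noncomputable def join {p q : Point} (h : p ≠ q) : Line := (R.A1 p q h).choose

lemma incid_join {p q : Point} (h : p ≠ q) :
    R.Incid p (R.join h) ∧ R.Incid q (R.join h) :=
  (R.A1 p q h).choose_spec.1

variable {R}

lemma eq_of_incid_of_incid {p q : Point} {l l' : Line} (hpq : p ≠ q)
    (hp : R.Incid p l) (hq : R.Incid q l) (hp' : R.Incid p l') (hq' : R.Incid q l') :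
    l = l' :=
  (R.A1 p q hpq).unique ⟨hp, hq⟩ ⟨hp', hq'⟩

lemma eq_D_of_incid_of_incid {s s' : Line} (hs : R.Incid R.D s) (hs' : R.Incid R.D s')
    (hne : s ≠ s') {p : Point} (hp : R.Incid p s) (hp' : R.Incid p s') : p = R.D := by
  by_contra hpD
  exact hne (eq_of_incid_of_incid hpD hp hs hp' hs')

lemma eq_of_incid_special_of_incid_ordinary {s l : Line} (hs : R.Incid R.D s)
    (hl : ¬R.Incid R.D l) {p q : Point} (hps : R.Incid p s) (hpl : R.Incid p l)
    (hqs : R.Incid q s) (hql : R.Incid q l) : p = q := by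
  by_contra hpq
  exact hl (eq_of_incid_of_incid hpq hps hqs hpl hql ▸ hs)

lemma exists_special_line_ne :
    ∃ s s' : Line, R.Incid R.D s ∧ R.Incid R.D s' ∧ s ≠ s' := by
  obtain ⟨a, b, c, d, hab, hac, had, hbc, hbd, hcd, habc, habd, hacd, hbcd⟩ := R.A2
  -- The joins of D with three non-collinear points other than D cannot all coincide.
  have of_noncollinear : ∀ x y z : Point, x ≠ R.D → y ≠ R.D → z ≠ R.D →
      (∀ l : Line, ¬(R.Incid x l ∧ R.Incid y l ∧ R.Incid z l)) →
      ∃ s s' : Line, R.Incid R.D s ∧ R.Incid R.D s' ∧ s ≠ s' := by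
    intro x y z hx hy hz hxyz
    obtain ⟨hDx, hxx⟩ := R.incid_join hx.symm
    obtain ⟨hDy, hyy⟩ := R.incid_join hy.symm
    obtain ⟨hDz, hzz⟩ := R.incid_join hz.symm
    by_cases hxy : R.join hx.symm = R.join hy.symm
    · exact ⟨_, _, hDx, hDz, fun hxz => hxyz _ ⟨hxx, hxy ▸ hyy, hxz ▸ hzz⟩⟩
    · exact ⟨_, _, hDx, hDy, hxy⟩
  by_cases ha : a = R.D
  · subst ha; exact of_noncollinear b c d hab.symm hac.symm had.symm hbcd
  by_cases hb : b = R.D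
  · subst hb; exact of_noncollinear a c d ha hbc.symm hbd.symm hacd
  by_cases hc : c = R.D
  · subst hc; exact of_noncollinear a b d ha hb hcd.symm habd
  · exact of_noncollinear a b c ha hb hc habc

lemma ncard_ordinaryPointsOn {s : Line} {n : ℕ} (hs : R.Incid R.D s)
    (h : {p : Point | R.Incid p s}.ncard = n + 1) : (R.ordinaryPointsOn s).ncard = n := by
  have hdiff : R.ordinaryPointsOn s = {p : Point | R.Incid p s} \ {R.D} := by
    ext p
    simp [ordinaryPointsOn]
  rw [hdiff, Set.ncard_sdiff_singleton_of_mem (show R.D ∈ {p : Point | R.Incid p s} from hs), h,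
    Nat.add_sub_cancel]

lemma biUnion_ordinaryPointsOn :
    ⋃ s ∈ R.specialLines, R.ordinaryPointsOn s = R.ordinaryPoints := by
  ext p
  simp only [Set.mem_iUnion, ordinaryPointsOn, specialLines, ordinaryPoints, Set.mem_ofPred_eq,
    exists_prop]
  refine ⟨fun ⟨_, _, _, hpD⟩ => hpD, fun hpD => ?_⟩
  obtain ⟨hD, hp⟩ := R.incid_join (Ne.symm hpD)
  exact ⟨_, hD, hp, hpD⟩

lemma pairwiseDisjoint_ordinaryPointsOn :
    R.specialLines.PairwiseDisjoint R.ordinaryPointsOn := by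
  intro s hs s' hs' hne
  refine Set.disjoint_left.2 fun p ⟨hp, hpD⟩ ⟨hp', _⟩ => hpD ?_
  exact eq_D_of_incid_of_incid hs hs' hne hp hp'

theorem ncard_ordinaryPoints {m n : ℕ} (h : R.HasOrder m n) :
    R.ordinaryPoints.ncard = (m + 1) * n := by
  obtain ⟨hspecial, hpoints⟩ := h
  have hfin : R.specialLines.Finite := Set.finite_of_ncard_ne_zero (by simp_all [specialLines])
  have hfin_on : ∀ s ∈ R.specialLines, (R.ordinaryPointsOn s).Finite := fun s hs =>
    (Set.finite_of_ncard_ne_zero (s := {p | R.Incid p s}) (by rw [hpoints s hs]; omega)).subset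
      fun _ hp => hp.1
  have hcard_on : ∀ s ∈ R.specialLines, (R.ordinaryPointsOn s).ncard = n := fun s hs =>
    ncard_ordinaryPointsOn hs (hpoints s hs)
  rw [← biUnion_ordinaryPointsOn, hfin.ncard_biUnion hfin_on pairwiseDisjoint_ordinaryPointsOn,
    finsum_mem_congr rfl hcard_on, finsum_mem_eq_finite_toFinset_sum _ hfin, Finset.sum_const,
    smul_eq_mul, ← Set.ncard_eq_toFinset_card _ hfin]
  exact congrArg (· * n) hspecial

lemma ne_of_mem_ordinaryPointsOn {s s' : Line} (hs : R.Incid R.D s) (hs' : R.Incid R.D s')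
    (hne : s ≠ s') {p q : Point} (hp : p ∈ R.ordinaryPointsOn s)
    (hq : q ∈ R.ordinaryPointsOn s') : p ≠ q := by
  rintro rfl
  exact hp.2 (eq_D_of_incid_of_incid hs hs' hne hp.1 hq.1)

lemma join_mem_ordinaryLines {s s' : Line} (hs : R.Incid R.D s) (hs' : R.Incid R.D s')
    (hne : s ≠ s') {p q : Point} (hp : p ∈ R.ordinaryPointsOn s)
    (hq : q ∈ R.ordinaryPointsOn s') :
    R.join (ne_of_mem_ordinaryPointsOn hs hs' hne hp hq) ∈ R.ordinaryLines := by
  intro hD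
  obtain ⟨hpj, hqj⟩ := R.incid_join (ne_of_mem_ordinaryPointsOn hs hs' hne hp hq)
  have hjs : R.join (ne_of_mem_ordinaryPointsOn hs hs' hne hp hq) = s :=
    eq_of_incid_of_incid hp.2 hpj hD hp.1 hs
  exact hq.2 (eq_D_of_incid_of_incid hs hs' hne (hjs ▸ hqj) hq.1)

lemma exists_mem_ordinaryPointsOn_incid {s l : Line} (hs : R.Incid R.D s)
    (hl : l ∈ R.ordinaryLines) : ∃ p ∈ R.ordinaryPointsOn s, R.Incid p l := by
  obtain ⟨p, ⟨hps, hpl⟩, -⟩ := R.A5 s l hs fun hls => hl (hls ▸ hs)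
  exact ⟨p, ⟨hps, fun hpD => hl (hpD ▸ hpl)⟩, hpl⟩

theorem ncard_ordinaryLines_eq_mul {s s' : Line} (hs : R.Incid R.D s)
    (hs' : R.Incid R.D s') (hne : s ≠ s') :
    R.ordinaryLines.ncard = (R.ordinaryPointsOn s).ncard * (R.ordinaryPointsOn s').ncard := by
  rw [← Set.ncard_prod, eq_comm]
  refine Set.ncard_congr (fun x hx => R.join (ne_of_mem_ordinaryPointsOn hs hs' hne hx.1 hx.2))
    (fun x hx => join_mem_ordinaryLines hs hs' hne hx.1 hx.2) ?_ ?_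
  · rintro ⟨p, q⟩ ⟨p', q'⟩ hx hx' hjoin
    have hl := join_mem_ordinaryLines hs hs' hne hx.1 hx.2
    obtain ⟨hpl, hql⟩ := R.incid_join (ne_of_mem_ordinaryPointsOn hs hs' hne hx.1 hx.2)
    obtain ⟨hpl', hql'⟩ := R.incid_join (ne_of_mem_ordinaryPointsOn hs hs' hne hx'.1 hx'.2)
    rw [← hjoin] at hpl' hql'
    exact Prod.ext (eq_of_incid_special_of_incid_ordinary hs hl hx.1.1 hpl hx'.1.1 hpl')
      (eq_of_incid_special_of_incid_ordinary hs' hl hx.2.1 hql hx'.2.1 hql')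
  · intro l hl
    obtain ⟨p, hp, hpl⟩ := exists_mem_ordinaryPointsOn_incid hs hl
    obtain ⟨q, hq, hql⟩ := exists_mem_ordinaryPointsOn_incid hs' hl
    have hpq := ne_of_mem_ordinaryPointsOn hs hs' hne hp hq
    exact ⟨(p, q), ⟨hp, hq⟩,
      eq_of_incid_of_incid hpq (R.incid_join hpq).1 (R.incid_join hpq).2 hpl hql⟩

theorem ncard_ordinaryLines {m n : ℕ} (h : R.HasOrder m n) : R.ordinaryLines.ncard = n ^ 2 := by
  obtain ⟨s, s', hs, hs', hne⟩ := exists_special_line_ne (R := R)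
  rw [ncard_ordinaryLines_eq_mul hs hs' hne, ncard_ordinaryPointsOn hs (h.2 s hs),
    ncard_ordinaryPointsOn hs' (h.2 s' hs'), sq]

end ProjRect

/-- A finite projective rectangle of order (m,n) has exactly (m+1)n ordinary points
and exactly n^2 ordinary lines. -/
theorem stmt_7 {Point Line : Type} (R : ProjRect Point Line) (m n : ℕ)
    (h : R.HasOrder m n) :
    Set.ncard {p : Point | p ≠ R.D} = (m + 1) * n ∧
    Set.ncard {l : Line | ¬R.Incid R.D l} = n ^ 2 :=
  ⟨R.ncard_ordinaryPoints h, R.ncard_ordinaryLines h⟩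
end

section
/- In a projective rectangle, every maximal projective subplane is full. -/
/-- A subplane of a projective rectangle: sets of points and lines which, with the
induced incidence, form a projective plane. -/
def ProjRect.IsSubplane {Point Line : Type} (R : ProjRect Point Line)
    (P' : Set Point) (L' : Set Line) : Prop :=
  (∀ p q, p ∈ P' → q ∈ P' → p ≠ q → ∃! l, l ∈ L' ∧ R.Incid p l ∧ R.Incid q l) ∧
  (∀ l m, l ∈ L' → m ∈ L' → l ≠ m → ∃ x, x ∈ P' ∧ R.Incid x l ∧ R.Incid x m) ∧
  (∃ a b c d, a ∈ P' ∧ b ∈ P' ∧ c ∈ P' ∧ d ∈ P' ∧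
    a ≠ b ∧ a ≠ c ∧ a ≠ d ∧ b ≠ c ∧ b ≠ d ∧ c ≠ d ∧
    (∀ l ∈ L', ¬(R.Incid a l ∧ R.Incid b l ∧ R.Incid c l)) ∧
    (∀ l ∈ L', ¬(R.Incid a l ∧ R.Incid b l ∧ R.Incid d l)) ∧
    (∀ l ∈ L', ¬(R.Incid a l ∧ R.Incid c l ∧ R.Incid d l)) ∧
    (∀ l ∈ L', ¬(R.Incid b l ∧ R.Incid c l ∧ R.Incid d l)))

/-- A subplane is full if it contains every point of each ordinary line it contains. -/
def ProjRect.IsFull {Point Line : Type} (R : ProjRect Point Line)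
    (P' : Set Point) (L' : Set Line) : Prop :=
  ∀ l ∈ L', ¬R.Incid R.D l → ∀ p, R.Incid p l → p ∈ P'


/-!
Let `l` be an ordinary line of a maximal subplane `π`. Some ordinary line `k ≠ l` of `π` meets `l`,
say at `c`. The points of the ordinary transversals of `l` and `k` (lines meeting them in two
distinct points), together with `D`, and the lines through two of these points, form a full
subplane: the restricted Pasch axiom (A6) is what makes any two of these lines meet, and what
shows that a line through `c` and one such point off `l ∪ k` consists of such points only. Every
point of `π` off `l ∪ k` other than `D` lies on two transversals belonging to `π`, at most one of
which passes through `D`, so `π` is contained in this span; by maximality it equals the span, which contains all of `l`.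
-/

namespace ProjRect

variable {Point Line : Type} (R : ProjRect Point Line)

theorem line_eq_of_incid_s11 {x y : Point} (hxy : x ≠ y) {n m : Line} (hxn : R.Incid x n)
    (hyn : R.Incid y n) (hxm : R.Incid x m) (hym : R.Incid y m) : n = m :=
  (R.A1 x y hxy).unique ⟨hxn, hyn⟩ ⟨hxm, hym⟩

theorem point_eq_of_incid {n m : Line} (hnm : n ≠ m) {x y : Point} (hxn : R.Incid x n)
    (hxm : R.Incid x m) (hyn : R.Incid y n) (hym : R.Incid y m) : x = y := by
  by_contra hxy
  exact hnm (R.line_eq_of_incid_s11 hxy hxn hyn hxm hym)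

theorem exists_two_incid_ne (n : Line) (z : Point) : ∃ u v : Point,
    R.Incid u n ∧ R.Incid v n ∧ u ≠ v ∧ u ≠ z ∧ v ≠ z := by
  obtain ⟨p, q, r, hpq, hpr, hqr, hp, hq, hr⟩ := R.A3 n
  by_cases hpz : p = z
  · subst hpz
    exact ⟨q, r, hq, hr, hqr, hpq.symm, hpr.symm⟩
  by_cases hqz : q = z
  · subst hqz
    exact ⟨p, r, hp, hr, hpr, hpz, hqr.symm⟩
  exact ⟨p, q, hp, hq, hpq, hpz, hqz⟩

theorem not_incid_D_or {q : Point} (hq : q ≠ R.D) {n m : Line} (hnm : n ≠ m)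
    (hqn : R.Incid q n) (hqm : R.Incid q m) : ¬R.Incid R.D n ∨ ¬R.Incid R.D m := by
  by_contra! h
  exact hnm (R.line_eq_of_incid_s11 hq hqn h.1 hqm h.2)

/-- (A6) with its six distinctness hypotheses derived from non-incidences: `j` and `m` are
ordinary lines meeting at `p`, `n'` crosses them at `w` and `c`, and `n` at `z` and `a`. -/
theorem exists_incid_of_pasch {j m n n' : Line} {p w c z a : Point}
    (hjD : ¬R.Incid R.D j) (hmD : ¬R.Incid R.D m) (hpj : R.Incid p j) (hpm : R.Incid p m)
    (hwj : R.Incid w j) (hwn' : R.Incid w n') (hwm : ¬R.Incid w m)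
    (hcm : R.Incid c m) (hcn' : R.Incid c n') (hcn : ¬R.Incid c n)
    (hzj : R.Incid z j) (hzn : R.Incid z n) (hzm : ¬R.Incid z m) (hzn' : ¬R.Incid z n')
    (ham : R.Incid a m) (han : R.Incid a n) : ∃ q, R.Incid q n ∧ R.Incid q n' := by
  obtain ⟨q, hqn', hqn⟩ := R.A6 j m n' n p w z c a hjD hmD (by rintro rfl; exact hwm hwj)
    hpj hpm (by rintro rfl; exact hzn' hzn) hwj hwn' hzj hzn hcm hcn' ham han
    (by rintro rfl; exact hzn' hwn') (by rintro rfl; exact hwm hcm)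
    (by rintro rfl; exact hwm ham) (by rintro rfl; exact hzm hcm)
    (by rintro rfl; exact hzm ham) (by rintro rfl; exact hcn han)
  exact ⟨q, hqn, hqn'⟩

structure OrdinaryCrossing (l k : Line) (c : Point) : Prop where
  not_incid_left : ¬R.Incid R.D l
  not_incid_right : ¬R.Incid R.D k
  ne : l ≠ k
  incid_left : R.Incid c l
  incid_right : R.Incid c k

def Transversal (l k n : Line) : Prop :=
  ∃ u v : Point, R.Incid u l ∧ R.Incid v k ∧ u ≠ v ∧ R.Incid u n ∧ R.Incid v n

/-- With `spanLines`, the full subplane spanned by two crossing ordinary lines `l` and `k`. -/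
def spanPoints (l k : Line) : Set Point :=
  {x | x = R.D ∨ ∃ n, R.Transversal l k n ∧ ¬R.Incid R.D n ∧ R.Incid x n}

def spanLines (l k : Line) : Set Line :=
  {n | ∃ x ∈ R.spanPoints l k, ∃ y ∈ R.spanPoints l k, x ≠ y ∧ R.Incid x n ∧ R.Incid y n}

variable {R}

theorem Transversal.symm {l k n : Line} (h : R.Transversal l k n) : R.Transversal k l n := by
  obtain ⟨u, v, hul, hvk, huv, hun, hvn⟩ := h
  exact ⟨v, u, hvk, hul, huv.symm, hvn, hun⟩

theorem mem_spanPoints_of_transversal {l k n : Line} (hn : R.Transversal l k n)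
    (hnD : ¬R.Incid R.D n) {x : Point} (hxn : R.Incid x n) : x ∈ R.spanPoints l k :=
  Or.inr ⟨n, hn, hnD, hxn⟩

theorem mem_spanPoints_symm {l k : Line} {x : Point} (hx : x ∈ R.spanPoints l k) :
    x ∈ R.spanPoints k l := by
  rcases hx with hx | ⟨n, hn, hnD, hxn⟩
  exacts [Or.inl hx, mem_spanPoints_of_transversal hn.symm hnD hxn]

theorem mem_spanPoints_of_two_transversals {l k m m' : Line} {q : Point} (hq : q ≠ R.D)
    (hmm' : m ≠ m') (hm : R.Transversal l k m) (hm' : R.Transversal l k m')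
    (hqm : R.Incid q m) (hqm' : R.Incid q m') : q ∈ R.spanPoints l k := by
  rcases R.not_incid_D_or hq hmm' hqm hqm' with hmD | hm'D
  exacts [mem_spanPoints_of_transversal hm hmD hqm, mem_spanPoints_of_transversal hm' hm'D hqm']

namespace OrdinaryCrossing

variable {l k : Line} {c : Point}

theorem symm (B : R.OrdinaryCrossing l k c) : R.OrdinaryCrossing k l c :=
  ⟨B.not_incid_right, B.not_incid_left, B.ne.symm, B.incid_right, B.incid_left⟩

theorem eq_of_incid (B : R.OrdinaryCrossing l k c) {x : Point} (hxl : R.Incid x l)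
    (hxk : R.Incid x k) : x = c :=
  R.point_eq_of_incid B.ne hxl hxk B.incid_left B.incid_right

theorem transversal_left (B : R.OrdinaryCrossing l k c) : R.Transversal l k l := by
  obtain ⟨u, -, hul, -, -, huc, -⟩ := R.exists_two_incid_ne l c
  exact ⟨u, c, hul, B.incid_right, huc, hul, B.incid_left⟩

theorem transversal_right (B : R.OrdinaryCrossing l k c) : R.Transversal l k k :=
  B.symm.transversal_left.symm

theorem mem_spanPoints_left (B : R.OrdinaryCrossing l k c) {x : Point} (hxl : R.Incid x l) :
    x ∈ R.spanPoints l k :=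
  mem_spanPoints_of_transversal B.transversal_left B.not_incid_left hxl

theorem mem_spanPoints_right (B : R.OrdinaryCrossing l k c) {x : Point} (hxk : R.Incid x k) :
    x ∈ R.spanPoints l k :=
  mem_spanPoints_of_transversal B.transversal_right B.not_incid_right hxk

theorem exists_incid_of_transversals (B : R.OrdinaryCrossing l k c) {n₁ n₂ : Line}
    (h₁ : R.Transversal l k n₁) (h₂ : R.Transversal l k n₂) (hn : n₁ ≠ n₂) :
    ∃ q, R.Incid q n₁ ∧ R.Incid q n₂ := by
  obtain ⟨u₁, v₁, hu₁l, hv₁k, huv₁, hu₁n, hv₁n⟩ := h₁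
  obtain ⟨u₂, v₂, hu₂l, hv₂k, huv₂, hu₂n, hv₂n⟩ := h₂
  by_cases hu : u₁ = u₂
  · exact ⟨u₁, hu₁n, hu ▸ hu₂n⟩
  by_cases hv : v₁ = v₂
  · exact ⟨v₁, hv₁n, hv ▸ hv₂n⟩
  by_cases huv : u₁ = v₂
  · exact ⟨u₁, hu₁n, huv ▸ hv₂n⟩
  by_cases hvu : u₂ = v₁
  · exact ⟨v₁, hv₁n, hvu ▸ hu₂n⟩
  exact R.A6 l k n₁ n₂ c u₁ u₂ v₁ v₂ B.not_incid_left B.not_incid_right B.ne B.incid_left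
    B.incid_right hn hu₁l hu₁n hu₂l hu₂n hv₁k hv₁n hv₂k hv₂n hu huv₁ huv hvu huv₂ hv

theorem exists_incid_left_of_incid_right (B : R.OrdinaryCrossing l k c) {n : Line}
    {z v : Point} (hz : z ∈ R.spanPoints l k) (hzn : R.Incid z n) (hzl : ¬R.Incid z l)
    (hzk : ¬R.Incid z k) (hvn : R.Incid v n) (hvk : R.Incid v k) (hvl : ¬R.Incid v l) :
    ∃ u, R.Incid u n ∧ R.Incid u l := by
  rcases hz with rfl | ⟨j, ⟨u, w, hul, hwk, huw, huj, hwj⟩, hjD, hzj⟩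
  · exact (R.A5 n l hzn (by rintro rfl; exact hzl hzn)).exists
  have huk : ¬R.Incid u k := fun huk => hzk (R.line_eq_of_incid_s11 huw huj hwj huk hwk ▸ hzj)
  have hcn : ¬R.Incid c n := fun hcn =>
    hzk (R.line_eq_of_incid_s11 (by rintro rfl; exact hvl B.incid_left) hcn hvn B.incid_right hvk ▸ hzn)
  exact R.exists_incid_of_pasch hjD B.not_incid_right hwj hwk huj hul huk B.incid_right
    B.incid_left hcn hzj hzn hzk hzl hvk hvn

theorem exists_incid_left_or_right (B : R.OrdinaryCrossing l k c) {n : Line} {x y : Point}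
    (hx : x ∈ R.spanPoints l k) (hxl : ¬R.Incid x l) (hxk : ¬R.Incid x k)
    (hy : y ∈ R.spanPoints l k) (hxy : x ≠ y) (hxn : R.Incid x n) (hyn : R.Incid y n) :
    (∃ u, R.Incid u n ∧ R.Incid u l) ∨ ∃ v, R.Incid v n ∧ R.Incid v k := by
  have hnl : n ≠ l := by rintro rfl; exact hxl hxn
  have hnk : n ≠ k := by rintro rfl; exact hxk hxn
  by_cases hnD : R.Incid R.D n
  · exact Or.inl (R.A5 n l hnD hnl.symm).exists
  by_cases hyl : R.Incid y l
  · exact Or.inl ⟨y, hyn, hyl⟩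
  by_cases hyk : R.Incid y k
  · exact Or.inr ⟨y, hyn, hyk⟩
  rcases hx with rfl | ⟨j₁, hj₁, hj₁D, hxj⟩
  · exact absurd hxn hnD
  rcases hy with rfl | ⟨j₂, hj₂, hj₂D, hyj⟩
  · exact absurd hyn hnD
  by_cases hj : j₁ = j₂
  · subst hj
    obtain ⟨u, -, hul, -, -, huj, -⟩ := hj₁
    exact Or.inl ⟨u, R.line_eq_of_incid_s11 hxy hxj hyj hxn hyn ▸ huj, hul⟩
  obtain ⟨p, hp₁, hp₂⟩ := B.exists_incid_of_transversals hj₁ hj₂ hj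
  obtain ⟨u₁, v₁, hu₁l, hv₁k, huv₁, hu₁j, hv₁j⟩ := hj₁
  obtain ⟨u₂, v₂, hu₂l, hv₂k, -, hu₂j, hv₂j⟩ := hj₂
  by_cases hu : u₁ = u₂
  · subst hu
    have hv : v₁ ≠ v₂ := by
      rintro rfl
      exact hj (R.line_eq_of_incid_s11 huv₁ hu₁j hv₁j hu₂j hv₂j)
    exact Or.inr (R.A6 j₁ j₂ n k p x v₁ y v₂ hj₁D hj₂D hj hp₁ hp₂ hnk hxj hxn hv₁j hv₁k hyj hyn
      hv₂j hv₂k (by rintro rfl; exact hxk hv₁k) hxy (by rintro rfl; exact hxk hv₂k)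
      (by rintro rfl; exact hyk hv₁k) hv (by rintro rfl; exact hyk hv₂k))
  · exact Or.inl (R.A6 j₁ j₂ n l p x u₁ y u₂ hj₁D hj₂D hj hp₁ hp₂ hnl hxj hxn hu₁j hu₁l hyj hyn
      hu₂j hu₂l (by rintro rfl; exact hxl hu₁l) hxy (by rintro rfl; exact hxl hu₂l)
      (by rintro rfl; exact hyl hu₁l) hu (by rintro rfl; exact hyl hu₂l))

theorem transversal_of_not_incid (B : R.OrdinaryCrossing l k c) {n : Line} {x y : Point}
    (hx : x ∈ R.spanPoints l k) (hxl : ¬R.Incid x l) (hxk : ¬R.Incid x k)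
    (hy : y ∈ R.spanPoints l k) (hxy : x ≠ y) (hxn : R.Incid x n) (hyn : R.Incid y n)
    (hcn : ¬R.Incid c n) : R.Transversal l k n := by
  have hlk : ∀ {u}, R.Incid u n → R.Incid u l → ¬R.Incid u k := fun hun hul huk =>
    hcn (B.eq_of_incid hul huk ▸ hun)
  obtain ⟨⟨u, hun, hul⟩, v, hvn, hvk⟩ :
      (∃ u, R.Incid u n ∧ R.Incid u l) ∧ ∃ v, R.Incid v n ∧ R.Incid v k := by
    rcases B.exists_incid_left_or_right hx hxl hxk hy hxy hxn hyn with ⟨u, hun, hul⟩ | ⟨v, hvn, hvk⟩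
    · exact ⟨⟨u, hun, hul⟩, B.symm.exists_incid_left_of_incid_right (mem_spanPoints_symm hx)
        hxn hxk hxl hun hul (hlk hun hul)⟩
    · exact ⟨B.exists_incid_left_of_incid_right hx hxn hxl hxk hvn hvk
        fun hvl => hlk hvn hvl hvk, v, hvn, hvk⟩
  exact ⟨u, v, hul, hvk, by rintro rfl; exact hlk hun hul hvk, hun, hvn⟩

theorem transversal_of_incid_union (B : R.OrdinaryCrossing l k c) {n : Line} {x y : Point}
    (hx : R.Incid x l ∨ R.Incid x k) (hy : R.Incid y l ∨ R.Incid y k) (hxy : x ≠ y)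
    (hxn : R.Incid x n) (hyn : R.Incid y n) : R.Transversal l k n := by
  rcases hx with hxl | hxk <;> rcases hy with hyl | hyk
  · exact R.line_eq_of_incid_s11 hxy hxl hyl hxn hyn ▸ B.transversal_left
  · exact ⟨x, y, hxl, hyk, hxy, hxn, hyn⟩
  · exact ⟨y, x, hyl, hxk, hxy.symm, hyn, hxn⟩
  · exact R.line_eq_of_incid_s11 hxy hxk hyk hxn hyn ▸ B.transversal_right

theorem mem_spanLines_cases (B : R.OrdinaryCrossing l k c) {n : Line}
    (hn : n ∈ R.spanLines l k) : R.Transversal l k n ∨ R.Incid c n ∧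
      ∃ w ∈ R.spanPoints l k, ¬R.Incid w l ∧ ¬R.Incid w k ∧ R.Incid w n := by
  obtain ⟨x, hx, y, hy, hxy, hxn, hyn⟩ := hn
  by_cases hxy' : (R.Incid x l ∨ R.Incid x k) ∧ (R.Incid y l ∨ R.Incid y k)
  · exact Or.inl (B.transversal_of_incid_union hxy'.1 hxy'.2 hxy hxn hyn)
  obtain ⟨w, hw, hwl, hwk, w', hw', hww', hwn, hw'n⟩ : ∃ w ∈ R.spanPoints l k,
      ¬R.Incid w l ∧ ¬R.Incid w k ∧
        ∃ w' ∈ R.spanPoints l k, w ≠ w' ∧ R.Incid w n ∧ R.Incid w' n := by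
    rw [not_and_or, not_or, not_or] at hxy'
    rcases hxy' with ⟨hxl, hxk⟩ | ⟨hyl, hyk⟩
    · exact ⟨x, hx, hxl, hxk, y, hy, hxy, hxn, hyn⟩
    · exact ⟨y, hy, hyl, hyk, x, hx, hxy.symm, hyn, hxn⟩
  by_cases hcn : R.Incid c n
  · exact Or.inr ⟨hcn, w, hw, hwl, hwk, hwn⟩
  · exact Or.inl (B.transversal_of_not_incid hw hwl hwk hw' hww' hwn hw'n hcn)

theorem exists_transversal_of_incid_pencil (B : R.OrdinaryCrossing l k c) {n j : Line}
    {w u v q : Point} (hnD : ¬R.Incid R.D n) (hcn : R.Incid c n) (hwn : R.Incid w n)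
    (hwl : ¬R.Incid w l) (hwk : ¬R.Incid w k) (hjD : ¬R.Incid R.D j) (hwj : R.Incid w j)
    (huj : R.Incid u j) (hul : R.Incid u l) (hvj : R.Incid v j) (hvk : R.Incid v k)
    (huv : u ≠ v) (hqn : R.Incid q n) (hql : ¬R.Incid q l) :
    ∃ m, R.Transversal l k m ∧ R.Incid q m ∧ R.Incid u m := by
  have huk : ¬R.Incid u k := fun huk => hwk (R.line_eq_of_incid_s11 huv huj hvj huk hvk ▸ hwj)
  have hcu : c ≠ u := by rintro rfl; exact huk B.incid_right
  have hun : ¬R.Incid u n := fun hun =>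
    hwl (R.line_eq_of_incid_s11 hcu hcn hun B.incid_left hul ▸ hwn)
  have hvn : ¬R.Incid v n := fun hvn =>
    hwk (R.line_eq_of_incid_s11 (by rintro rfl; exact hwl (R.line_eq_of_incid_s11 huv huj hvj hul
      B.incid_left ▸ hwj)) hcn hvn B.incid_right hvk ▸ hwn)
  obtain ⟨m, hqm, hum⟩ := (R.A1 q u (by rintro rfl; exact hql hul)).exists
  have hcm : ¬R.Incid c m := fun hcm =>
    hql (R.line_eq_of_incid_s11 hcu hcm hum B.incid_left hul ▸ hqm)
  obtain ⟨v', hv'm, hv'k⟩ := R.exists_incid_of_pasch hjD hnD hwj hwn hvj hvk hvn hcn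
    B.incid_right hcm huj hum hun huk hqn hqm
  exact ⟨m, ⟨u, v', hul, hv'k, by rintro rfl; exact huk hv'k, hum, hv'm⟩, hqm, hum⟩

theorem mem_spanPoints_of_incid_pencil (B : R.OrdinaryCrossing l k c) {n : Line}
    {w q : Point} (hnD : ¬R.Incid R.D n) (hcn : R.Incid c n) (hw : w ∈ R.spanPoints l k)
    (hwl : ¬R.Incid w l) (hwk : ¬R.Incid w k) (hwn : R.Incid w n) (hqn : R.Incid q n) :
    q ∈ R.spanPoints l k := by
  by_cases hql : R.Incid q l
  · exact B.mem_spanPoints_left hql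
  by_cases hqk : R.Incid q k
  · exact B.mem_spanPoints_right hqk
  rcases hw with rfl | ⟨j, hj, hjD, hwj⟩
  · exact absurd hwn hnD
  by_cases hqj : R.Incid q j
  · exact mem_spanPoints_of_transversal hj hjD hqj
  obtain ⟨u, v, hul, hvk, huv, huj, hvj⟩ := hj
  obtain ⟨m, hm, hqm, hum⟩ :=
    B.exists_transversal_of_incid_pencil hnD hcn hwn hwl hwk hjD hwj huj hul hvj hvk huv hqn hql
  obtain ⟨m', hm', hqm', hvm'⟩ := B.symm.exists_transversal_of_incid_pencil hnD hcn hwn hwk hwl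
    hjD hwj hvj hvk huj hul huv.symm hqn hqk
  refine mem_spanPoints_of_two_transversals (by rintro rfl; exact hnD hqn) ?_ hm hm'.symm hqm hqm'
  rintro rfl
  exact hqj (R.line_eq_of_incid_s11 huv hum hvm' huj hvj ▸ hqm)

theorem mem_spanPoints_of_mem_spanLines (B : R.OrdinaryCrossing l k c) {n : Line}
    (hn : n ∈ R.spanLines l k) (hnD : ¬R.Incid R.D n) {q : Point} (hqn : R.Incid q n) :
    q ∈ R.spanPoints l k := by
  rcases B.mem_spanLines_cases hn with hT | ⟨hcn, w, hw, hwl, hwk, hwn⟩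
  · exact mem_spanPoints_of_transversal hT hnD hqn
  · exact B.mem_spanPoints_of_incid_pencil hnD hcn hw hwl hwk hwn hqn

theorem exists_incid_of_transversal_of_pencil (B : R.OrdinaryCrossing l k c) {n₁ n₂ : Line}
    (h₁ : R.Transversal l k n₁) (hcn₂ : R.Incid c n₂) {w : Point} (hw : w ∈ R.spanPoints l k)
    (hwl : ¬R.Incid w l) (hwk : ¬R.Incid w k) (hwn₂ : R.Incid w n₂) (hn : n₁ ≠ n₂) :
    ∃ q, R.Incid q n₁ ∧ R.Incid q n₂ := by
  by_cases hcn₁ : R.Incid c n₁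
  · exact ⟨c, hcn₁, hcn₂⟩
  by_cases hwn₁ : R.Incid w n₁
  · exact ⟨w, hwn₁, hwn₂⟩
  rcases hw with rfl | ⟨j, hj, hjD, hwj⟩
  · exact (R.A5 n₂ n₁ hwn₂ hn).exists.imp fun _ h => h.symm
  obtain ⟨z, hzn₁, hzj⟩ := B.exists_incid_of_transversals h₁ hj (by rintro rfl; exact hwn₁ hwj)
  by_cases hzn₂ : R.Incid z n₂
  · exact ⟨z, hzn₁, hzn₂⟩
  obtain ⟨u, v, hul, hvk, -, huj, hvj⟩ := hj
  obtain ⟨a, b, hal, hbk, -, han₁, hbn₁⟩ := h₁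
  by_cases hzl : R.Incid z l
  · have hzk : ¬R.Incid z k := fun hzk => hcn₁ (B.eq_of_incid hzl hzk ▸ hzn₁)
    exact R.exists_incid_of_pasch hjD B.not_incid_right hvj hvk hwj hwn₂ hwk B.incid_right hcn₂
      hcn₁ hzj hzn₁ hzk hzn₂ hbk hbn₁
  · exact R.exists_incid_of_pasch hjD B.not_incid_left huj hul hwj hwn₂ hwl B.incid_left hcn₂
      hcn₁ hzj hzn₁ hzl hzn₂ hal han₁

theorem exists_incid_of_mem_spanLines (B : R.OrdinaryCrossing l k c) {n₁ n₂ : Line}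
    (h₁ : n₁ ∈ R.spanLines l k) (h₂ : n₂ ∈ R.spanLines l k) (hn : n₁ ≠ n₂) :
    ∃ q, R.Incid q n₁ ∧ R.Incid q n₂ := by
  rcases B.mem_spanLines_cases h₁ with hT₁ | ⟨hcn₁, w₁, hw₁, hw₁l, hw₁k, hw₁n⟩ <;>
    rcases B.mem_spanLines_cases h₂ with hT₂ | ⟨hcn₂, w₂, hw₂, hw₂l, hw₂k, hw₂n⟩
  · exact B.exists_incid_of_transversals hT₁ hT₂ hn
  · exact B.exists_incid_of_transversal_of_pencil hT₁ hcn₂ hw₂ hw₂l hw₂k hw₂n hn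
  · exact (B.exists_incid_of_transversal_of_pencil hT₂ hcn₁ hw₁ hw₁l hw₁k hw₁n hn.symm).imp
      fun _ h => h.symm
  · exact ⟨c, hcn₁, hcn₂⟩

theorem exists_mem_spanPoints_incid (B : R.OrdinaryCrossing l k c) {n₁ n₂ : Line}
    (h₁ : n₁ ∈ R.spanLines l k) (h₂ : n₂ ∈ R.spanLines l k) (hn : n₁ ≠ n₂) :
    ∃ q ∈ R.spanPoints l k, R.Incid q n₁ ∧ R.Incid q n₂ := by
  obtain ⟨q, hqn₁, hqn₂⟩ := B.exists_incid_of_mem_spanLines h₁ h₂ hn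
  by_cases hn₁D : R.Incid R.D n₁
  · by_cases hn₂D : R.Incid R.D n₂
    · exact ⟨R.D, Or.inl rfl, hn₁D, hn₂D⟩
    · exact ⟨q, B.mem_spanPoints_of_mem_spanLines h₂ hn₂D hqn₂, hqn₁, hqn₂⟩
  · exact ⟨q, B.mem_spanPoints_of_mem_spanLines h₁ hn₁D hqn₁, hqn₁, hqn₂⟩

theorem isSubplane_span (B : R.OrdinaryCrossing l k c) :
    R.IsSubplane (R.spanPoints l k) (R.spanLines l k) := by
  refine ⟨fun x y hx hy hxy => ?_, fun n₁ n₂ h₁ h₂ hn => B.exists_mem_spanPoints_incid h₁ h₂ hn,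
    ?_⟩
  · obtain ⟨n, hxn, hyn⟩ := (R.A1 x y hxy).exists
    exact ⟨n, ⟨⟨x, hx, y, hy, hxy, hxn, hyn⟩, hxn, hyn⟩,
      fun m hm => R.line_eq_of_incid_s11 hxy hm.2.1 hm.2.2 hxn hyn⟩
  obtain ⟨u₁, u₂, hu₁, hu₂, hu, hu₁c, hu₂c⟩ := R.exists_two_incid_ne l c
  obtain ⟨v₁, v₂, hv₁, hv₂, hv, hv₁c, hv₂c⟩ := R.exists_two_incid_ne k c
  have hne : ∀ {u v}, R.Incid u l → R.Incid v k → u ≠ c → u ≠ v := fun hul hvk huc h =>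
    huc (B.eq_of_incid hul (h ▸ hvk))
  have hcol_l : ∀ {m v}, R.Incid u₁ m → R.Incid u₂ m → R.Incid v k → R.Incid v m → v = c :=
    fun h₁ h₂ hvk hvm => B.eq_of_incid (R.line_eq_of_incid_s11 hu h₁ h₂ hu₁ hu₂ ▸ hvm) hvk
  have hcol_k : ∀ {m u}, R.Incid v₁ m → R.Incid v₂ m → R.Incid u l → R.Incid u m → u = c :=
    fun h₁ h₂ hul hum => B.eq_of_incid hul (R.line_eq_of_incid_s11 hv h₁ h₂ hv₁ hv₂ ▸ hum)
  refine ⟨u₁, u₂, v₁, v₂, B.mem_spanPoints_left hu₁, B.mem_spanPoints_left hu₂,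
    B.mem_spanPoints_right hv₁, B.mem_spanPoints_right hv₂, hu, hne hu₁ hv₁ hu₁c,
    hne hu₁ hv₂ hu₁c, hne hu₂ hv₁ hu₂c, hne hu₂ hv₂ hu₂c, hv, ?_, ?_, ?_, ?_⟩ <;>
    rintro m - ⟨h₁, h₂, h₃⟩
  · exact hv₁c (hcol_l h₁ h₂ hv₁ h₃)
  · exact hv₂c (hcol_l h₁ h₂ hv₂ h₃)
  · exact hu₁c (hcol_k h₂ h₃ hu₁ h₁)
  · exact hu₂c (hcol_k h₂ h₃ hu₂ h₁)

end OrdinaryCrossing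

namespace IsSubplane

variable {P' : Set Point} {L' : Set Line}

theorem exists_three_incid_of_not_incid (hsub : R.IsSubplane P' L') {n : Line} (hn : n ∈ L')
    {q r₁ r₂ r₃ : Point} (hq : q ∈ P') (hqn : ¬R.Incid q n) (hr₁ : r₁ ∈ P') (hr₂ : r₂ ∈ P')
    (hr₃ : r₃ ∈ P') (hqr₁ : q ≠ r₁) (hqr₂ : q ≠ r₂) (hqr₃ : q ≠ r₃)
    (h₁₂ : ∀ m ∈ L', ¬(R.Incid q m ∧ R.Incid r₁ m ∧ R.Incid r₂ m))
    (h₁₃ : ∀ m ∈ L', ¬(R.Incid q m ∧ R.Incid r₁ m ∧ R.Incid r₃ m))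
    (h₂₃ : ∀ m ∈ L', ¬(R.Incid q m ∧ R.Incid r₂ m ∧ R.Incid r₃ m)) :
    ∃ x₁ x₂ x₃, x₁ ∈ P' ∧ x₂ ∈ P' ∧ x₃ ∈ P' ∧ R.Incid x₁ n ∧ R.Incid x₂ n ∧ R.Incid x₃ n ∧
      x₁ ≠ x₂ ∧ x₁ ≠ x₃ ∧ x₂ ≠ x₃ := by
  have project : ∀ r ∈ P', q ≠ r →
      ∃ g ∈ L', R.Incid q g ∧ R.Incid r g ∧ ∃ x ∈ P', R.Incid x g ∧ R.Incid x n := by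
    intro r hr hqr
    obtain ⟨g, ⟨hg, hqg, hrg⟩, -⟩ := hsub.1 q r hq hr hqr
    exact ⟨g, hg, hqg, hrg, hsub.2.1 g n hg hn (by rintro rfl; exact hqn hqg)⟩
  obtain ⟨g₁, hg₁, hqg₁, hrg₁, x₁, hx₁, hxg₁, hxn₁⟩ := project r₁ hr₁ hqr₁
  obtain ⟨g₂, hg₂, hqg₂, hrg₂, x₂, hx₂, hxg₂, hxn₂⟩ := project r₂ hr₂ hqr₂
  obtain ⟨g₃, hg₃, hqg₃, hrg₃, x₃, hx₃, hxg₃, hxn₃⟩ := project r₃ hr₃ hqr₃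
  have hne : ∀ {g g' : Line} {x : Point}, g ≠ g' → R.Incid q g → R.Incid q g' →
      R.Incid x g → R.Incid x g' → ¬R.Incid x n := fun hg hqg hqg' hxg hxg' hxn =>
    hqn (R.point_eq_of_incid hg hxg hxg' hqg hqg' ▸ hxn)
  refine ⟨x₁, x₂, x₃, hx₁, hx₂, hx₃, hxn₁, hxn₂, hxn₃, ?_, ?_, ?_⟩ <;> rintro rfl
  · exact hne (by rintro rfl; exact h₁₂ g₁ hg₁ ⟨hqg₁, hrg₁, hrg₂⟩) hqg₁ hqg₂ hxg₁ hxg₂ hxn₁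
  · exact hne (by rintro rfl; exact h₁₃ g₁ hg₁ ⟨hqg₁, hrg₁, hrg₃⟩) hqg₁ hqg₃ hxg₁ hxg₃ hxn₁
  · exact hne (by rintro rfl; exact h₂₃ g₂ hg₂ ⟨hqg₂, hrg₂, hrg₃⟩) hqg₂ hqg₃ hxg₂ hxg₃ hxn₂

theorem exists_three_incid (hsub : R.IsSubplane P' L') {n : Line} (hn : n ∈ L') :
    ∃ x₁ x₂ x₃, x₁ ∈ P' ∧ x₂ ∈ P' ∧ x₃ ∈ P' ∧ R.Incid x₁ n ∧ R.Incid x₂ n ∧ R.Incid x₃ n ∧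
      x₁ ≠ x₂ ∧ x₁ ≠ x₃ ∧ x₂ ≠ x₃ := by
  obtain ⟨a, b, c, d, ha, hb, hc, hd, hab, hac, had, hbc, hbd, hcd, habc, habd, hacd, hbcd⟩ :=
    hsub.2.2
  by_cases han : R.Incid a n
  · by_cases hbn : R.Incid b n
    · by_cases hcn : R.Incid c n
      · exact absurd ⟨han, hbn, hcn⟩ (habc n hn)
      · exact hsub.exists_three_incid_of_not_incid hn hc hcn ha hb hd hac.symm hbc.symm hcd
          (fun m hm ⟨h₁, h₂, h₃⟩ => habc m hm ⟨h₂, h₃, h₁⟩)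
          (fun m hm ⟨h₁, h₂, h₃⟩ => hacd m hm ⟨h₂, h₁, h₃⟩)
          (fun m hm ⟨h₁, h₂, h₃⟩ => hbcd m hm ⟨h₂, h₁, h₃⟩)
    · exact hsub.exists_three_incid_of_not_incid hn hb hbn ha hc hd hab.symm hbc hbd
        (fun m hm ⟨h₁, h₂, h₃⟩ => habc m hm ⟨h₂, h₁, h₃⟩)
        (fun m hm ⟨h₁, h₂, h₃⟩ => habd m hm ⟨h₂, h₁, h₃⟩) hbcd
  · exact hsub.exists_three_incid_of_not_incid hn ha han hb hc hd hab hac had habc habd hacd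

theorem exists_two_incid_ne (hsub : R.IsSubplane P' L') {n : Line} (hn : n ∈ L') (z : Point) :
    ∃ u ∈ P', ∃ v ∈ P', R.Incid u n ∧ R.Incid v n ∧ u ≠ v ∧ u ≠ z ∧ v ≠ z := by
  obtain ⟨x₁, x₂, x₃, hx₁, hx₂, hx₃, hxn₁, hxn₂, hxn₃, h₁₂, h₁₃, h₂₃⟩ :=
    hsub.exists_three_incid hn
  by_cases h₁ : x₁ = z
  · subst h₁
    exact ⟨x₂, hx₂, x₃, hx₃, hxn₂, hxn₃, h₂₃, h₁₂.symm, h₁₃.symm⟩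
  by_cases h₂ : x₂ = z
  · subst h₂
    exact ⟨x₁, hx₁, x₃, hx₃, hxn₁, hxn₃, h₁₃, h₁, h₂₃.symm⟩
  exact ⟨x₁, hx₁, x₂, hx₂, hxn₁, hxn₂, h₁₂, h₁, h₂⟩

theorem exists_not_incid_ne (hsub : R.IsSubplane P' L') {n : Line} (hn : n ∈ L') (z : Point) :
    ∃ q ∈ P', ¬R.Incid q n ∧ q ≠ z := by
  obtain ⟨a, b, c, d, ha, hb, hc, hd, hab, hac, had, hbc, hbd, hcd, habc, habd, hacd, hbcd⟩ :=
    hsub.2.2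
  by_contra! h
  have hon : ∀ q ∈ P', q ≠ z → R.Incid q n := fun q hq hqz =>
    by_contra fun hqn => hqz (h q hq hqn)
  rcases eq_or_ne a z with rfl | haz
  · exact hbcd n hn ⟨hon b hb hab.symm, hon c hc hac.symm, hon d hd had.symm⟩
  rcases eq_or_ne b z with rfl | hbz
  · exact hacd n hn ⟨hon a ha hab, hon c hc hbc.symm, hon d hd hbd.symm⟩
  rcases eq_or_ne c z with rfl | hcz
  · exact habd n hn ⟨hon a ha hac, hon b hb hbc, hon d hd hcd.symm⟩
  · exact habc n hn ⟨hon a ha haz, hon b hb hbz, hon c hc hcz⟩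

theorem exists_ordinaryCrossing (hsub : R.IsSubplane P' L') {l : Line} (hl : l ∈ L')
    (hlD : ¬R.Incid R.D l) : ∃ k ∈ L', ∃ c, R.OrdinaryCrossing l k c := by
  obtain ⟨q, hq, hql, hqD⟩ := hsub.exists_not_incid_ne hl R.D
  obtain ⟨u, hu, v, hv, hul, hvl, huv, -, -⟩ := hsub.exists_two_incid_ne hl q
  obtain ⟨m₁, ⟨hm₁, hqm₁, hum₁⟩, -⟩ := hsub.1 q u hq hu (by rintro rfl; exact hql hul)
  obtain ⟨m₂, ⟨hm₂, hqm₂, hvm₂⟩, -⟩ := hsub.1 q v hq hv (by rintro rfl; exact hql hvl)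
  have hm : m₁ ≠ m₂ := by
    rintro rfl
    exact hql (R.line_eq_of_incid_s11 huv hum₁ hvm₂ hul hvl ▸ hqm₁)
  have crossing : ∀ {m x}, R.Incid q m → R.Incid x l → R.Incid x m → ¬R.Incid R.D m →
      R.OrdinaryCrossing l m x := fun hqm hxl hxm hmD =>
    ⟨hlD, hmD, by rintro rfl; exact hql hqm, hxl, hxm⟩
  rcases R.not_incid_D_or hqD hm hqm₁ hqm₂ with hm₁D | hm₂D
  · exact ⟨m₁, hm₁, u, crossing hqm₁ hul hum₁ hm₁D⟩
  · exact ⟨m₂, hm₂, v, crossing hqm₂ hvl hvm₂ hm₂D⟩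

theorem subset_spanPoints (hsub : R.IsSubplane P' L') {l k : Line} {c : Point}
    (B : R.OrdinaryCrossing l k c) (hl : l ∈ L') (hk : k ∈ L') : P' ⊆ R.spanPoints l k := by
  intro z hz
  by_cases hzl : R.Incid z l
  · exact B.mem_spanPoints_left hzl
  by_cases hzk : R.Incid z k
  · exact B.mem_spanPoints_right hzk
  by_cases hzD : z = R.D
  · exact Or.inl hzD
  have transversal_through : ∀ u ∈ P', R.Incid u l → u ≠ c →
      ∃ n, R.Transversal l k n ∧ R.Incid z n ∧ R.Incid u n := by
    intro u hu hul huc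
    obtain ⟨n, ⟨hn, hzn, hun⟩, -⟩ := hsub.1 z u hz hu (by rintro rfl; exact hzl hul)
    obtain ⟨v, -, hvn, hvk⟩ := hsub.2.1 n k hn hk (by rintro rfl; exact hzk hzn)
    exact ⟨n, ⟨u, v, hul, hvk, fun h => huc (B.eq_of_incid hul (h ▸ hvk)), hun, hvn⟩, hzn, hun⟩
  obtain ⟨u, hu, u', hu', hul, hu'l, huu', huc, hu'c⟩ := hsub.exists_two_incid_ne hl c
  obtain ⟨n, hn, hzn, hun⟩ := transversal_through u hu hul huc
  obtain ⟨n', hn', hzn', hu'n'⟩ := transversal_through u' hu' hu'l hu'c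
  refine mem_spanPoints_of_two_transversals hzD ?_ hn hn' hzn hzn'
  rintro rfl
  exact hzl (R.line_eq_of_incid_s11 huu' hun hu'n' hul hu'l ▸ hzn)

theorem subset_spanLines (hsub : R.IsSubplane P' L') {l k : Line} {c : Point}
    (B : R.OrdinaryCrossing l k c) (hl : l ∈ L') (hk : k ∈ L') : L' ⊆ R.spanLines l k := by
  intro n hn
  obtain ⟨x, y, -, hx, hy, -, hxn, hyn, -, hxy, -, -⟩ := hsub.exists_three_incid hn
  exact ⟨x, hsub.subset_spanPoints B hl hk hx, y, hsub.subset_spanPoints B hl hk hy, hxy, hxn, hyn⟩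

end IsSubplane

end ProjRect

/-- Every maximal subplane of a projective rectangle is full. -/
theorem stmt_11 {Point Line : Type} (R : ProjRect Point Line)
    (P' : Set Point) (L' : Set Line) (hsub : R.IsSubplane P' L')
    (hmax : ∀ P'' : Set Point, ∀ L'' : Set Line, R.IsSubplane P'' L'' →
      P' ⊆ P'' → L' ⊆ L'' → P' = P'' ∧ L' = L'') :
    R.IsFull P' L' := by
  intro l hl hlD p hpl
  obtain ⟨k, hk, c, B⟩ := hsub.exists_ordinaryCrossing hl hlD
  obtain ⟨hP, -⟩ := hmax _ _ B.isSubplane_span (hsub.subset_spanPoints B hl hk)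
    (hsub.subset_spanLines B hl hk)
  exact hP ▸ B.mem_spanPoints_left hpl
end
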